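/- arXiv:1503.00172 — 4 statements merged into one kernel-verified Lean document; each statement's English description precedes it below -/
import Mathlib

section
/- The set Λ = ℤ² ∪ (L + (0, 1/2)), with L = {(√2·m₁, m₂) : (m₁,m₂) ∈ ℤ²}, is not contained in any finite union of translates of a full-rank lattice in ℝ². -/
/-!
If `Λ` lay in finitely many cosets of `K = A(ℤ²)`, pigeonhole on the points `(n, 0)` and on
`(√2 n, 1/2)` would give nonzero integers `d, e` with `(d, 0), (√2 e, 0) ∈ K`. Then `d • u` and
`√2 e • u` are both integer vectors for `u = A⁻¹(1, 0) ≠ 0`, and comparing a nonzero coordinate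
of `u` makes `√2` rational.
-/

/-- The set `Λ = ℤ² ∪ (L + (0, 1/2))`, where `L = √2 ℤ × ℤ`. -/
noncomputable def LambdaSet : Set (EuclideanSpace ℝ (Fin 2)) :=
  {v | ∃ n₁ n₂ : ℤ, v = (WithLp.toLp 2 ![(n₁ : ℝ), (n₂ : ℝ)] : EuclideanSpace ℝ (Fin 2))} ∪
  {v | ∃ m₁ m₂ : ℤ, v = (WithLp.toLp 2 ![Real.sqrt 2 * m₁, (m₂ : ℝ) + 1 / 2] : EuclideanSpace ℝ (Fin 2))}

theorem AddSubgroup.exists_ne_sub_mem_of_finite_cover {G ι : Type*} [AddGroup G] [Infinite ι]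
    (K : AddSubgroup G) {F : Set G} (hF : F.Finite) (f : ι → G)
    (hf : ∀ i, ∃ a ∈ F, f i - a ∈ K) : ∃ i j, i ≠ j ∧ f i - f j ∈ K := by
  choose a haF haK using hf
  have : Finite F := hF.to_subtype
  obtain ⟨i, j, hij, hsame⟩ :=
    Finite.exists_ne_map_eq_of_infinite fun i => (⟨a i, haF i⟩ : F)
  have ha : a i = a j := congrArg Subtype.val hsame
  refine ⟨i, j, hij, ?_⟩
  rw [← sub_sub_sub_cancel_right (f i) (f j) (a i)]
  exact K.sub_mem (haK i) (ha ▸ haK j)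

section IntegerPoints

variable {ι : Type*}

def integerPoints (ι : Type*) : AddSubgroup (EuclideanSpace ℝ ι) where
  carrier := {x | ∀ i, ∃ m : ℤ, x i = m}
  zero_mem' _ := ⟨0, by simp⟩
  add_mem' hx hy i := by
    obtain ⟨m, hm⟩ := hx i
    obtain ⟨n, hn⟩ := hy i
    exact ⟨m + n, by simp [hm, hn]⟩
  neg_mem' hx i := by
    obtain ⟨m, hm⟩ := hx i
    exact ⟨-m, by simp [hm]⟩

theorem exists_rat_eq_mul_of_smul_mem_integerPoints {u : EuclideanSpace ℝ ι} (hu : u ≠ 0)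
    {x y : ℝ} (hx : x ≠ 0) (hxu : x • u ∈ integerPoints ι) (hyu : y • u ∈ integerPoints ι) :
    ∃ q : ℚ, y = q * x := by
  obtain ⟨i, hi⟩ : ∃ i, u i ≠ 0 := by
    by_contra! h
    exact hu (PiLp.ext h)
  obtain ⟨p, hp⟩ := hxu i
  obtain ⟨r, hr⟩ := hyu i
  simp only [PiLp.smul_apply, smul_eq_mul] at hp hr
  have hp0 : (p : ℝ) ≠ 0 := hp ▸ mul_ne_zero hx hi
  refine ⟨r / p, ?_⟩
  push_cast
  rw [← hp, ← hr]
  field_simp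

def imageLattice (A : EuclideanSpace ℝ ι ≃ₗ[ℝ] EuclideanSpace ℝ ι) :
    AddSubgroup (EuclideanSpace ℝ ι) :=
  (integerPoints ι).map A.toAddEquiv.toAddMonoidHom

theorem mem_imageLattice {A : EuclideanSpace ℝ ι ≃ₗ[ℝ] EuclideanSpace ℝ ι}
    {v : EuclideanSpace ℝ ι} : v ∈ imageLattice A ↔ A.symm v ∈ integerPoints ι :=
  AddSubgroup.mem_map_equiv

theorem exists_rat_eq_mul_of_smul_mem_imageLattice
    (A : EuclideanSpace ℝ ι ≃ₗ[ℝ] EuclideanSpace ℝ ι) {w : EuclideanSpace ℝ ι} (hw : w ≠ 0)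
    {x y : ℝ} (hx : x ≠ 0) (hxw : x • w ∈ imageLattice A) (hyw : y • w ∈ imageLattice A) :
    ∃ q : ℚ, y = q * x := by
  rw [mem_imageLattice, map_smul] at hxw hyw
  exact exists_rat_eq_mul_of_smul_mem_integerPoints (by simpa using hw) hx hxw hyw

end IntegerPoints

theorem toLp_sub_toLp_eq_smul (a b c : ℝ) :
    (!₂[a, c] : EuclideanSpace ℝ (Fin 2)) - !₂[b, c] = (a - b) • !₂[1, 0] := by
  ext i; fin_cases i <;> simp

theorem exists_sub_mem_imageLattice
    {A : EuclideanSpace ℝ (Fin 2) ≃ₗ[ℝ] EuclideanSpace ℝ (Fin 2)}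
    {F : Set (EuclideanSpace ℝ (Fin 2))} {v : EuclideanSpace ℝ (Fin 2)} (hv : ∃ m₁ m₂ : ℤ, ∃ a ∈ F,
      v = A (WithLp.toLp 2 ![(m₁ : ℝ), (m₂ : ℝ)] : EuclideanSpace ℝ (Fin 2)) + a) :
    ∃ a ∈ F, v - a ∈ imageLattice A := by
  obtain ⟨m₁, m₂, a, ha, rfl⟩ := hv
  refine ⟨a, ha, ?_⟩
  rw [add_sub_cancel_right, mem_imageLattice, LinearEquiv.symm_apply_apply]
  intro i
  fin_cases i
  exacts [⟨m₁, rfl⟩, ⟨m₂, rfl⟩]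

/-- `Λ` is not contained in any finite union of translates of a full-rank lattice `A(ℤ²)`. -/
theorem stmt3 :
    ¬ ∃ (A : EuclideanSpace ℝ (Fin 2) ≃ₗ[ℝ] EuclideanSpace ℝ (Fin 2))
        (F : Set (EuclideanSpace ℝ (Fin 2))), F.Finite ∧
        LambdaSet ⊆ {v | ∃ m₁ m₂ : ℤ, ∃ a ∈ F,
          v = A (WithLp.toLp 2 ![(m₁ : ℝ), (m₂ : ℝ)] : EuclideanSpace ℝ (Fin 2)) + a} := by
  rintro ⟨A, F, hF, hsub⟩
  obtain ⟨i, j, hij, hK₁⟩ := (imageLattice A).exists_ne_sub_mem_of_finite_cover hF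
    (fun n : ℤ => !₂[(n : ℝ), 0])
    fun n => exists_sub_mem_imageLattice (hsub (Or.inl ⟨n, 0, by simp⟩))
  obtain ⟨k, l, hkl, hK₂⟩ := (imageLattice A).exists_ne_sub_mem_of_finite_cover hF
    (fun n : ℤ => !₂[√2 * n, 1 / 2])
    fun n => exists_sub_mem_imageLattice (hsub (Or.inr ⟨n, 0, by simp⟩))
  simp only [toLp_sub_toLp_eq_smul] at hK₁ hK₂
  obtain ⟨q, hq⟩ := exists_rat_eq_mul_of_smul_mem_imageLattice A (by simp)
    (by exact_mod_cast sub_ne_zero.2 hij) hK₁ hK₂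
  refine (irrational_sqrt_two.mul_intCast (sub_ne_zero.2 hkl)).ne_rat (q * (i - j)) ?_
  push_cast
  rw [mul_sub, hq]
end

section
/- Let θ ≠ π/2 (mod π). The set {n₁·cos θ + n₂·sin θ + m₁·√2·cos θ + m₂·sin θ + (1/2)·sin θ : n₁,n₂,m₁,m₂ ∈ ℤ} ∪ {n₁·cos θ + n₂·sin θ : n₁,n₂ ∈ ℤ} is not uniformly discrete in ℝ; in fact, 0 is an accumulation point of differences of its elements. -/
open Real

theorem Irrational.exists_int_add_int_mul_mem_Ioo {ξ δ : ℝ} (hξ : Irrational ξ) (hδ : 0 < δ) :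
    ∃ a b : ℤ, (a : ℝ) + b * ξ ∈ Set.Ioo 0 δ := by
  have hdense : Dense (AddSubgroup.closure {ξ, 1} : Set ℝ) :=
    dense_addSubgroupClosure_pair_iff.mpr (by simpa using hξ)
  obtain ⟨x, hx, hx_mem⟩ := hdense.exists_between hδ
  obtain ⟨b, a, rfl⟩ := AddSubgroup.mem_closure_pair.mp hx
  exact ⟨a, b, by simpa [add_comm] using hx_mem⟩

/-- The projection of the counterexample set on the direction `(cos θ, sin θ)`,
`θ ≠ π/2 (mod π)`, is not uniformly discrete; in fact `0` is an accumulation point of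
differences of its elements. -/
theorem stmt5 (θ : ℝ) (hθ : ∀ k : ℤ, θ ≠ π / 2 + k * π) :
    let S : Set ℝ :=
      {t | ∃ n₁ n₂ m₁ m₂ : ℤ, t = (n₁ : ℝ) * cos θ + (n₂ : ℝ) * sin θ +
        (m₁ : ℝ) * Real.sqrt 2 * cos θ + (m₂ : ℝ) * sin θ + (1 / 2) * sin θ} ∪
      {t | ∃ n₁ n₂ : ℤ, t = (n₁ : ℝ) * cos θ + (n₂ : ℝ) * sin θ}
    (¬ ∃ γ > (0 : ℝ), ∀ s ∈ S, ∀ t ∈ S, s ≠ t → γ ≤ |s - t|) ∧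
    (∀ ε > (0 : ℝ), ∃ s ∈ S, ∃ t ∈ S, s ≠ t ∧ |s - t| < ε) := by
  intro S
  have hcos : 0 < |cos θ| :=
    abs_pos.mpr <| cos_ne_zero_iff.mpr fun k hk ↦ hθ k (by rw [hk]; ring)
  -- Two points of `S` differing only in `(n₁, m₁) = (a, b)` are `(a + b√2) cos θ` apart.
  have small_gaps : ∀ ε > (0 : ℝ), ∃ s ∈ S, ∃ t ∈ S, s ≠ t ∧ |s - t| < ε := by
    intro ε hε
    obtain ⟨a, b, hpos, hlt⟩ :=
      irrational_sqrt_two.exists_int_add_int_mul_mem_Ioo (div_pos hε hcos)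
    have hgap : |(a + b * √2) * cos θ| < ε := by
      rw [abs_mul, abs_of_pos hpos]
      exact (lt_div_iff₀ hcos).mp hlt
    refine ⟨a * cos θ + (0 : ℤ) * sin θ + b * √2 * cos θ + (0 : ℤ) * sin θ + 1 / 2 * sin θ,
      Or.inl ⟨a, 0, b, 0, rfl⟩,
      (0 : ℤ) * cos θ + (0 : ℤ) * sin θ + (0 : ℤ) * √2 * cos θ + (0 : ℤ) * sin θ + 1 / 2 * sin θ,
      Or.inl ⟨0, 0, 0, 0, rfl⟩, ?_, ?_⟩
    · have : (a + b * √2) * cos θ ≠ 0 := mul_ne_zero hpos.ne' (abs_pos.mp hcos)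
      contrapose! this
      linear_combination this
    · convert hgap using 2
      push_cast
      ring
  refine ⟨?_, small_gaps⟩
  rintro ⟨γ, hγ, hsep⟩
  obtain ⟨s, hs, t, ht, hst, hlt⟩ := small_gaps γ hγ
  exact (hsep s hs t ht hst).not_gt hlt
end

section
/- Let Λ₁, Λ₂ ⊂ ℝᵖ be nonempty sets such that for some R < ∞ every ball of radius R meets both Λ₁ and Λ₂. If the difference set Λ₁ − Λ₂ = {x − y : x ∈ Λ₁, y ∈ Λ₂} is discrete (has no accumulation points), then there exists r > 0 such that any ball of radius r contains at most one point of Λ₁ and at most one point of Λ₂. -/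
/-!
A ball of radius `r < 1/2` containing two points `a ≠ b` of `Λ₁` gives, with a point
`y ∈ Λ₂` within `R` of `a`, two distinct differences `a - y`, `b - y` in
`(Λ₁ - Λ₂) ∩ closedBall 0 (R + 1)` at distance `dist a b < 2r`. That set is finite, hence
uniformly separated, which bounds `r` from below. Exchanging the roles of `Λ₁` and `Λ₂`
handles `Λ₂`.
-/

open Metric Filter Topology
open scoped Pointwise

lemma Set.Finite.exists_pos_eq_of_dist_lt {X : Type*} [MetricSpace X] {F : Set X}
    (hF : F.Finite) : ∃ ε > (0 : ℝ), ∀ x ∈ F, ∀ y ∈ F, dist x y < ε → x = y := by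
  have hsep : ∀ᶠ ε in 𝓝[>] (0 : ℝ),
      0 < ε ∧ ∀ q ∈ F ×ˢ F \ Set.diagonal X, ε < dist q.1 q.2 :=
    eventually_mem_nhdsWithin.and <| (hF.prod hF).sdiff.eventually_all.2 fun q hq =>
      nhdsWithin_le_nhds (eventually_lt_nhds (dist_pos.2 hq.2))
  obtain ⟨ε, hε, hε_lt⟩ := hsep.exists
  exact ⟨ε, hε, fun x hx y hy hxy => by_contra fun hne =>
    (hε_lt (x, y) ⟨⟨hx, hy⟩, hne⟩).not_gt hxy⟩

lemma Set.subsingleton_inter_ball_of_dist_lt_imp_eq {X : Type*} [PseudoMetricSpace X]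
    {S : Set X} {δ r : ℝ} (hS : ∀ a ∈ S, ∀ b ∈ S, dist a b < δ → a = b)
    (hr : 2 * r ≤ δ) (z : X) : (S ∩ ball z r).Subsingleton := by
  rintro a ⟨ha, haz⟩ b ⟨hb, hbz⟩
  refine hS a ha b hb ?_
  calc dist a b ≤ dist a z + dist b z := dist_triangle_right a b z
    _ < r + r := add_lt_add haz hbz
    _ ≤ δ := by linarith

lemma exists_pos_eq_of_dist_lt_of_finite_sub_inter_closedBall {E : Type*}
    [NormedAddCommGroup E] {S T : Set E} {R : ℝ}
    (hST : ∀ a ∈ S, ∃ y ∈ T, ‖y - a‖ ≤ R)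
    (hfin : ((S - T) ∩ closedBall 0 (R + 1)).Finite) :
    ∃ δ > (0 : ℝ), ∀ a ∈ S, ∀ b ∈ S, dist a b < δ → a = b := by
  obtain ⟨ε, hε, hsep⟩ := hfin.exists_pos_eq_of_dist_lt
  refine ⟨min ε 1, by positivity, fun a ha b hb hab => ?_⟩
  obtain ⟨y, hy, hay⟩ := hST a ha
  have hmem : ∀ c ∈ S, dist c a < 1 → c - y ∈ (S - T) ∩ closedBall 0 (R + 1) :=
    fun c hc hca => ⟨Set.sub_mem_sub hc hy, mem_closedBall_zero_iff.2 <| by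
      rw [dist_eq_norm] at hca
      linarith [norm_sub_le_norm_sub_add_norm_sub c a y, norm_sub_rev y a]⟩
  have hba : dist b a < 1 := by
    rw [dist_comm]; exact hab.trans_le (min_le_right _ _)
  refine sub_left_injective (hsep _ (hmem a ha (by simp)) _ (hmem b hb hba) ?_)
  rw [dist_sub_right]
  exact hab.trans_le (min_le_left _ _)

theorem stmt9_general {p : ℕ} (Λ₁ Λ₂ : Set (EuclideanSpace ℝ (Fin p))) (R : ℝ)
    (h₁ : ∀ z : EuclideanSpace ℝ (Fin p), ∃ x ∈ Λ₁, ‖x - z‖ ≤ R)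
    (h₂ : ∀ z : EuclideanSpace ℝ (Fin p), ∃ y ∈ Λ₂, ‖y - z‖ ≤ R)
    (hdisc : ∀ K : Set (EuclideanSpace ℝ (Fin p)), IsCompact K →
      ({d | ∃ x ∈ Λ₁, ∃ y ∈ Λ₂, d = x - y} ∩ K).Finite) :
    ∃ r > (0 : ℝ), ∀ z : EuclideanSpace ℝ (Fin p),
      (Λ₁ ∩ Metric.ball z r).Subsingleton ∧ (Λ₂ ∩ Metric.ball z r).Subsingleton := by
  have hdiff : {d | ∃ x ∈ Λ₁, ∃ y ∈ Λ₂, d = x - y} = Λ₁ - Λ₂ := by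
    ext d; simp [Set.mem_sub, eq_comm]
  have hfin₁₂ := hdisc _ (isCompact_closedBall 0 (R + 1))
  rw [hdiff] at hfin₁₂
  have hfin₂₁ : ((Λ₂ - Λ₁) ∩ closedBall 0 (R + 1)).Finite := by
    simpa [Set.inter_neg, neg_sub] using hfin₁₂.neg
  obtain ⟨δ₁, hδ₁, hsep₁⟩ := exists_pos_eq_of_dist_lt_of_finite_sub_inter_closedBall
    (fun a _ => h₂ a) hfin₁₂
  obtain ⟨δ₂, hδ₂, hsep₂⟩ := exists_pos_eq_of_dist_lt_of_finite_sub_inter_closedBall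
    (fun a _ => h₁ a) hfin₂₁
  refine ⟨min δ₁ δ₂ / 2, by positivity, fun z => ⟨?_, ?_⟩⟩
  · exact Set.subsingleton_inter_ball_of_dist_lt_imp_eq hsep₁
      (by linarith [min_le_left δ₁ δ₂]) z
  · exact Set.subsingleton_inter_ball_of_dist_lt_imp_eq hsep₂
      (by linarith [min_le_right δ₁ δ₂]) z

/-- If every ball of radius `R` meets the nonempty sets `Λ₁, Λ₂ ⊆ ℝᵖ` and the difference
set `Λ₁ - Λ₂` is discrete (finite on compacts), then there is `r > 0` such that every
ball of radius `r` contains at most one point of `Λ₁` and at most one point of `Λ₂`. -/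
theorem stmt9 {p : ℕ} (Λ₁ Λ₂ : Set (EuclideanSpace ℝ (Fin p))) (R : ℝ) (hR : 0 < R)
    (h₁ : ∀ z : EuclideanSpace ℝ (Fin p), ∃ x ∈ Λ₁, ‖x - z‖ ≤ R)
    (h₂ : ∀ z : EuclideanSpace ℝ (Fin p), ∃ y ∈ Λ₂, ‖y - z‖ ≤ R)
    (hdisc : ∀ K : Set (EuclideanSpace ℝ (Fin p)), IsCompact K →
      ({d | ∃ x ∈ Λ₁, ∃ y ∈ Λ₂, d = x - y} ∩ K).Finite) :
    ∃ r > (0 : ℝ), ∀ z : EuclideanSpace ℝ (Fin p),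
      (Λ₁ ∩ Metric.ball z r).Subsingleton ∧ (Λ₂ ∩ Metric.ball z r).Subsingleton :=
  stmt9_general Λ₁ Λ₂ R h₁ h₂ hdisc
end

section
/- Let Λ₁, Λ₂ ⊂ ℝᵖ be such that every ball of radius R meets Λ₁ and meets Λ₂, every ball of radius r contains at most one point of each, and the difference set Λ₁ − Λ₂ is discrete. Suppose T ∈ ℝᵖ is a common period: Λ₁ + T = Λ₁ and Λ₂ + T = Λ₂. If for each j ∈ {1,…,p} such a common period T_j exists inside the cone {x : |x − ⟨x,e_j⟩e_j| < γ|x|, |x| > 1} with γ small, then there exist a full-rank lattice L and finite sets F₁, F₂ ⊂ ℝᵖ with Λ₁ = L + F₁ and Λ₂ = L + F₂. -/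
open scoped RealInnerProductSpace Pointwise

/-!
For `γ ≤ 1 / p`, the coordinate matrix of `p` vectors lying in the cones of aperture `γ` around the
coordinate axes is strictly diagonally dominant, so common periods `T₁, …, T_p` in these cones form
a basis `b` of `ℝᵖ`, and the lattice `L = ℤ b` stabilises `Λ₁` and `Λ₂`. Translating a point of
`Λ₂` (resp. `Λ₁`) shows that `Λ₁` (resp. `Λ₂`) meets every compact set in a finite set, because the
difference set does. Hence `Fᵢ := Λᵢ ∩ P`, with `P` the half-open fundamental parallelepiped of
`b`, is finite, and reducing points modulo `L` gives `Λᵢ = L + Fᵢ`.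
-/

namespace AddAction

theorem mem_stabilizer_of_setOf_add_eq {G : Type*} [AddCommGroup G] {Λ : Set G} {t : G}
    (h : {x | ∃ a ∈ Λ, x = a + t} = Λ) : t ∈ stabilizer G Λ := by
  refine mem_stabilizer_set.2 fun b => ⟨fun hb => ?_, fun hb => ?_⟩
  · rw [← h] at hb
    obtain ⟨a, ha, hab⟩ := hb
    rw [vadd_eq_add, add_comm, add_left_inj] at hab
    rwa [hab]
  · rw [← h]; exact ⟨b, hb, add_comm _ _⟩

theorem add_mem_of_mem_stabilizer {E : Type*} [AddGroup E] {Λ : Set E} {v a : E}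
    (hv : v ∈ stabilizer E Λ) (ha : a ∈ Λ) : v + a ∈ Λ :=
  (mem_stabilizer_set.1 hv a).2 ha

theorem sum_intCast_smul_mem_stabilizer {R E ι : Type*} [Ring R] [AddCommGroup E] [Module R E]
    [Fintype ι] {Λ : Set E} {v : ι → E} (hv : ∀ i, v i ∈ stabilizer E Λ) (n : ι → ℤ) :
    ∑ i, (n i : R) • v i ∈ stabilizer E Λ :=
  AddSubgroup.sum_mem _ fun i _ => by
    rw [Int.cast_smul_eq_zsmul]; exact AddSubgroup.zsmul_mem _ (hv i) _

end AddAction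

open AddAction ZSpan in
theorem exists_finite_eq_intCombination_add {E ι : Type*} [NormedAddCommGroup E] [NormedSpace ℝ E]
    [FiniteDimensional ℝ E] [Fintype ι] (b : Module.Basis ι ℝ E) {Λ : Set E}
    (hper : ∀ i, b i ∈ stabilizer E Λ)
    (hfin : ∀ K, IsCompact K → (Λ ∩ K).Finite) :
    ∃ F : Set E, F.Finite ∧
      Λ = {x | ∃ (n : ι → ℤ) (f : E), f ∈ F ∧ x = ∑ i, (n i : ℝ) • b i + f} := by
  refine ⟨Λ ∩ fundamentalDomain b,
    (hfin _ (fundamentalDomain_isBounded b).isCompact_closure).subset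
      (Set.inter_subset_inter_right _ subset_closure), Set.ext fun x => ⟨fun hx => ?_, ?_⟩⟩
  · have hfloor : (floor b x : E) = ∑ i, (⌊b.repr x i⌋ : ℝ) • b i := by
      simp [floor, Int.cast_smul_eq_zsmul]
    refine ⟨fun i => ⌊b.repr x i⌋, fract b x, ⟨?_, fract_mem_fundamentalDomain b x⟩, ?_⟩
    · rw [fract_apply, hfloor, sub_eq_neg_add]
      exact add_mem_of_mem_stabilizer (neg_mem (sum_intCast_smul_mem_stabilizer hper _)) hx
    · rw [fract_apply, hfloor, add_sub_cancel]
  · rintro ⟨n, f, ⟨hf, -⟩, rfl⟩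
    exact add_mem_of_mem_stabilizer (sum_intCast_smul_mem_stabilizer hper n) hf

theorem finite_inter_of_finite_sub_inter_left {G : Type*} [AddGroup G] [TopologicalSpace G]
    [IsTopologicalAddGroup G] {A B : Set G}
    (hAB : ∀ K, IsCompact K → ({d | ∃ x ∈ A, ∃ y ∈ B, d = x - y} ∩ K).Finite)
    {y : G} (hy : y ∈ B) {K : Set G} (hK : IsCompact K) : (A ∩ K).Finite := by
  refine ((hAB _ (hK.image (continuous_sub_right y))).preimage
    (f := fun x => x - y) sub_left_injective.injOn).subset fun x ⟨hxA, hxK⟩ => ?_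
  exact ⟨⟨x, hxA, y, hy, rfl⟩, x, hxK, rfl⟩

theorem finite_inter_of_finite_sub_inter_right {G : Type*} [AddGroup G] [TopologicalSpace G]
    [IsTopologicalAddGroup G] {A B : Set G}
    (hAB : ∀ K, IsCompact K → ({d | ∃ x ∈ A, ∃ y ∈ B, d = x - y} ∩ K).Finite)
    {x : G} (hx : x ∈ A) {K : Set G} (hK : IsCompact K) : (B ∩ K).Finite := by
  refine ((hAB _ (hK.image (continuous_sub_left x))).preimage
    (f := fun y => x - y) sub_right_injective.injOn).subset fun y ⟨hyB, hyK⟩ => ?_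
  exact ⟨⟨x, hx, y, hyB, rfl⟩, y, hyK, rfl⟩

namespace EuclideanSpace

variable {ι : Type*} [Fintype ι] [DecidableEq ι]

def axisCone (j : ι) (γ : ℝ) : Set (EuclideanSpace ℝ ι) :=
  {x | ‖x - ⟪x, single j 1⟫ • single j 1‖ < γ * ‖x‖}

theorem sum_erase_abs_lt_abs_of_mem_axisCone {γ : ℝ} (hγ : Fintype.card ι * γ ≤ 1) {j : ι}
    {x : EuclideanSpace ℝ ι} (hx : x ∈ axisCone j γ) :
    ∑ i ∈ Finset.univ.erase j, |x i| < |x j| := by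
  set u := x - x j • single j (1 : ℝ)
  have hu : ‖u‖ < γ * ‖x‖ := by simpa [axisCone, inner_single_right] using hx
  have hoff : ∀ i ∈ Finset.univ.erase j, |x i| ≤ ‖u‖ := fun i hi => by
    have : u i = x i := by simp [u, Finset.ne_of_mem_erase hi]
    simpa [this] using PiLp.norm_apply_le u i
  have hdiag : ‖x‖ ≤ ‖u‖ + |x j| := by
    have := norm_le_norm_sub_add x (x j • single j (1 : ℝ))
    rwa [norm_smul, PiLp.norm_single, norm_one, mul_one, Real.norm_eq_abs] at this
  have hcard : (1 : ℝ) ≤ Fintype.card ι := by exact_mod_cast Fintype.card_pos_iff.2 ⟨j⟩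
  calc ∑ i ∈ Finset.univ.erase j, |x i| ≤ (Fintype.card ι - 1) * ‖u‖ := by
        have := Finset.sum_le_card_nsmul _ _ _ hoff
        rwa [Finset.card_erase_of_mem (Finset.mem_univ j), Finset.card_univ, nsmul_eq_mul,
          Nat.cast_sub (by exact_mod_cast hcard), Nat.cast_one] at this
    _ < |x j| := by
        have : Fintype.card ι * ‖u‖ < ‖x‖ :=
          calc _ < Fintype.card ι * (γ * ‖x‖) := mul_lt_mul_of_pos_left hu (by linarith)
            _ ≤ ‖x‖ := by rw [← mul_assoc]; exact mul_le_of_le_one_left (norm_nonneg x) hγ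
        linarith

theorem linearIndependent_of_mem_axisCone {γ : ℝ} (hγ : Fintype.card ι * γ ≤ 1)
    {T : ι → EuclideanSpace ℝ ι} (hT : ∀ j, T j ∈ axisCone j γ) : LinearIndependent ℝ T := by
  have hdet : (Matrix.of fun j i => T j i).det ≠ 0 :=
    det_ne_zero_of_sum_row_lt_diag fun j => by
      simpa using sum_erase_abs_lt_abs_of_mem_axisCone hγ (hT j)
  exact .of_comp (WithLp.linearEquiv 2 ℝ (ι → ℝ)).toLinearMap
    (Matrix.linearIndependent_rows_of_det_ne_zero hdet)

end EuclideanSpace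

theorem stmt16_general {p : ℕ} (Λ₁ Λ₂ : Set (EuclideanSpace ℝ (Fin p))) (R : ℝ)
    (h₁ : ∀ z : EuclideanSpace ℝ (Fin p), ∃ x ∈ Λ₁, ‖x - z‖ ≤ R)
    (h₂ : ∀ z : EuclideanSpace ℝ (Fin p), ∃ y ∈ Λ₂, ‖y - z‖ ≤ R)
    (hdisc : ∀ K : Set (EuclideanSpace ℝ (Fin p)), IsCompact K →
      ({d | ∃ x ∈ Λ₁, ∃ y ∈ Λ₂, d = x - y} ∩ K).Finite)
    (hper : ∀ γ > (0 : ℝ), ∃ T : Fin p → EuclideanSpace ℝ (Fin p), ∀ j : Fin p,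
      ‖T j - ⟪T j, EuclideanSpace.single j (1 : ℝ)⟫ • EuclideanSpace.single j (1 : ℝ)‖
          < γ * ‖T j‖ ∧ 1 < ‖T j‖ ∧
        {x | ∃ a ∈ Λ₁, x = a + T j} = Λ₁ ∧ {x | ∃ b ∈ Λ₂, x = b + T j} = Λ₂) :
    ∃ T : Fin p → EuclideanSpace ℝ (Fin p), LinearIndependent ℝ T ∧
      ∃ F₁ F₂ : Set (EuclideanSpace ℝ (Fin p)), F₁.Finite ∧ F₂.Finite ∧
        Λ₁ = {x | ∃ (n : Fin p → ℤ) (f : EuclideanSpace ℝ (Fin p)),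
          f ∈ F₁ ∧ x = (∑ j, (n j : ℝ) • T j) + f} ∧
        Λ₂ = {x | ∃ (n : Fin p → ℤ) (f : EuclideanSpace ℝ (Fin p)),
          f ∈ F₂ ∧ x = (∑ j, (n j : ℝ) • T j) + f} := by
  obtain ⟨x₀, hx₀, -⟩ := h₁ 0
  obtain ⟨y₀, hy₀, -⟩ := h₂ 0
  obtain ⟨T, hT⟩ := hper (1 / (p + 1)) (by positivity)
  have hli : LinearIndependent ℝ T := by
    refine EuclideanSpace.linearIndependent_of_mem_axisCone ?_ fun j => (hT j).1
    rw [Fintype.card_fin, mul_one_div, div_le_one (by positivity)]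
    linarith
  let b := basisOfLinearIndependentOfCardEqFinrank' T hli (by simp)
  have hb : ⇑b = T := coe_basisOfLinearIndependentOfCardEqFinrank' T hli _
  obtain ⟨F₁, hF₁, hΛ₁⟩ := exists_finite_eq_intCombination_add b
    (fun j => hb ▸ AddAction.mem_stabilizer_of_setOf_add_eq (hT j).2.2.1)
    fun _ => finite_inter_of_finite_sub_inter_left hdisc hy₀
  obtain ⟨F₂, hF₂, hΛ₂⟩ := exists_finite_eq_intCombination_add b
    (fun j => hb ▸ AddAction.mem_stabilizer_of_setOf_add_eq (hT j).2.2.2)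
    fun _ => finite_inter_of_finite_sub_inter_right hdisc hx₀
  rw [hb] at hΛ₁ hΛ₂
  exact ⟨T, hli, F₁, F₂, hF₁, hF₂, hΛ₁, hΛ₂⟩

/-- If `Λ₁, Λ₂ ⊆ ℝᵖ` are relatively dense, uniformly separated, have discrete difference
set, and admit common periods inside arbitrarily narrow cones around each coordinate axis,
then `Λ₁ = L + F₁` and `Λ₂ = L + F₂` for a full-rank lattice `L` and finite sets `F₁, F₂`. -/
theorem stmt16 {p : ℕ} (Λ₁ Λ₂ : Set (EuclideanSpace ℝ (Fin p))) (R r : ℝ)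
    (hR : 0 < R) (hr : 0 < r)
    (h₁ : ∀ z : EuclideanSpace ℝ (Fin p), ∃ x ∈ Λ₁, ‖x - z‖ ≤ R)
    (h₂ : ∀ z : EuclideanSpace ℝ (Fin p), ∃ y ∈ Λ₂, ‖y - z‖ ≤ R)
    (hone : ∀ z : EuclideanSpace ℝ (Fin p),
      (Λ₁ ∩ Metric.ball z r).Subsingleton ∧ (Λ₂ ∩ Metric.ball z r).Subsingleton)
    (hdisc : ∀ K : Set (EuclideanSpace ℝ (Fin p)), IsCompact K →
      ({d | ∃ x ∈ Λ₁, ∃ y ∈ Λ₂, d = x - y} ∩ K).Finite)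
    (hper : ∀ γ > (0 : ℝ), ∃ T : Fin p → EuclideanSpace ℝ (Fin p), ∀ j : Fin p,
      ‖T j - ⟪T j, EuclideanSpace.single j (1 : ℝ)⟫ • EuclideanSpace.single j (1 : ℝ)‖
          < γ * ‖T j‖ ∧ 1 < ‖T j‖ ∧
        {x | ∃ a ∈ Λ₁, x = a + T j} = Λ₁ ∧ {x | ∃ b ∈ Λ₂, x = b + T j} = Λ₂) :
    ∃ T : Fin p → EuclideanSpace ℝ (Fin p), LinearIndependent ℝ T ∧
      ∃ F₁ F₂ : Set (EuclideanSpace ℝ (Fin p)), F₁.Finite ∧ F₂.Finite ∧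
        Λ₁ = {x | ∃ (n : Fin p → ℤ) (f : EuclideanSpace ℝ (Fin p)),
          f ∈ F₁ ∧ x = (∑ j, (n j : ℝ) • T j) + f} ∧
        Λ₂ = {x | ∃ (n : Fin p → ℤ) (f : EuclideanSpace ℝ (Fin p)),
          f ∈ F₂ ∧ x = (∑ j, (n j : ℝ) • T j) + f} :=
  stmt16_general Λ₁ Λ₂ R h₁ h₂ hdisc hper
end
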